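/- arXiv:2105.11434 — 2 statements merged into one kernel-verified Lean document; each statement's English description precedes it below -/
import Mathlib

section
/- Let V be a type, E : V → V → Prop a directed graph, and F : V → V → Prop a subrelation of E (the forest edges, directed from parent to child) such that: (i) every vertex has at most one F-parent (F u v and F u' v imply u = u'), and (ii) the ancestor relation A = Relation.ReflTransGen F is antisymmetric. Call a pair (a,b) with E a b and ¬F a b a surplus edge. Suppose E v w, suppose w leads to v in E, and suppose v is not an F-descendant of w (¬A w v). Then there exist vertices a, b with: w leads to a, E a b and ¬F a b (so (a,b) is a surplus edge), b leads to v, and a is an F-descendant of w (A w a). In particular (a,b) lies on a directed cycle through v and w, hence in the same strongly connected component. (This is the abstract form of Lemma 'whatispartofscc', parts 3 and 4: a forest edge, or a non-ancestral surplus edge, is part of an SCC only if its head is an ancestor of the tail of a surplus edge that is part of that SCC.) -/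
/-- `x` leads to `y` in the digraph `E`: there is a directed path from `x` to `y`. -/
def Leads {V : Type*} (E : V → V → Prop) (x y : V) : Prop :=
  Relation.ReflTransGen E x y

/-! The `F`-descendants of `w` form a set closed under forest edges. An `E`-path from `w` to
`v`, which lies outside that set, must leave it along some edge `(a, b)`; this edge cannot be a
forest edge, so it is a surplus edge whose tail `a` is an `F`-descendant of `w`. -/

theorem Relation.ReflTransGen.exists_exit {α : Type*} {r : α → α → Prop} {p : α → Prop}
    {x y : α} (h : Relation.ReflTransGen r x y) (hx : p x) (hy : ¬ p y) :
    ∃ a b, Relation.ReflTransGen r x a ∧ r a b ∧ p a ∧ ¬ p b ∧ Relation.ReflTransGen r b y := by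
  induction h with
  | refl => exact absurd hx hy
  | @tail b c hxb hbc ih =>
    by_cases hb : p b
    · exact ⟨b, c, hxb, hbc, hb, hy, .refl⟩
    · obtain ⟨a, a', hxa, haa', ha, ha', ha'b⟩ := ih hb
      exact ⟨a, a', hxa, haa', ha, ha', ha'b.tail hbc⟩

theorem edge_in_scc_head_ancestor_of_surplus_tail_general {V : Type*} (E F : V → V → Prop)
    (v w : V) (hlead : Leads E w v)
    (hnotdesc : ¬ Relation.ReflTransGen F w v) :
    ∃ a b : V, Leads E w a ∧ E a b ∧ ¬ F a b ∧ Leads E b v ∧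
      Relation.ReflTransGen F w a := by
  obtain ⟨a, b, hwa, hab, hdesc_a, hdesc_b, hbv⟩ :=
    Relation.ReflTransGen.exists_exit (p := Relation.ReflTransGen F w) hlead .refl hnotdesc
  exact ⟨a, b, hwa, hab, fun hF => hdesc_b (hdesc_a.tail hF), hbv, hdesc_a⟩

/-- Abstract form of Lemma `whatispartofscc`, parts 3 and 4.  Let `F ≤ E` be a spanning
forest (every vertex has at most one `F`-parent and the ancestor relation
`A = Relation.ReflTransGen F` is antisymmetric).  If `E v w`, `w` leads to `v` in `E`,
and `v` is not an `F`-descendant of `w`, then there is a surplus edge `(a, b)`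
(i.e. `E a b` but not `F a b`) with `w ⇝ a`, `b ⇝ v`, and `a` an `F`-descendant of `w`. -/
theorem edge_in_scc_head_ancestor_of_surplus_tail {V : Type*} (E F : V → V → Prop)
    (hFE : ∀ u v, F u v → E u v)
    (hparent : ∀ u u' v, F u v → F u' v → u = u')
    (hanti : ∀ u v, Relation.ReflTransGen F u v → Relation.ReflTransGen F v u → u = v)
    (v w : V) (hvw : E v w) (hlead : Leads E w v)
    (hnotdesc : ¬ Relation.ReflTransGen F w v) :
    ∃ a b : V, Leads E w a ∧ E a b ∧ ¬ F a b ∧ Leads E b v ∧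
      Relation.ReflTransGen F w a :=
  edge_in_scc_head_ancestor_of_surplus_tail_general E F v w hlead hnotdesc
end

section
/- Let S be a metric space and, for each n ≥ 1, let (X_n, Y_n, Z_n) be a random variable with values in [0,∞) × [0,∞) × S. Suppose there exists a [0,∞) × S-valued random variable (Y, Z) such that: (1) (Y_n, Z_n) converges in distribution to (Y, Z); (2) X_n ≥ Y_n almost surely for all n; (3) E[X_n] = 1 for all n and E[Y] = 1. Then (X_n, Z_n) converges in distribution to (Y, Z), and moreover (X_n)_{n≥1} is uniformly integrable: lim_{L→∞} sup_n E[X_n 1{X_n > L}] = 0. -/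
/-!
Clip `Yₙ` to `[0, k]`. Since `Xₙ ≥ max Yₙ 0`, the distance `E|Xₙ - clip k Yₙ|` equals
`1 - E[clip k Yₙ]`, which tends to `1 - E[clip k Y]` as `n → ∞` by the convergence in
distribution of `(Yₙ, Zₙ)`, and this tends to `0` as `k → ∞` because `E[Y] = 1`. So for large `k`
and `n`, `Xₙ` is `L¹`-close to `clip k Yₙ`, the law of `(clip k Yₙ, Zₙ)` is close to that of
`(clip k Y, Z)`, and `clip k Y` is `L¹`-close to `Y`: testing against bounded Lipschitz functions
gives the convergence in distribution. Uniform integrability follows from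
`X 𝟙{X > 2k} ≤ 2 (X - clip k Y)`.
-/

open MeasureTheory Filter Topology BoundedContinuousFunction

theorem Filter.eventually_forall_of_eventually_cofinite_prod {ι α : Type*} {l : Filter α}
    {p : ι → α → Prop} (h : ∀ᶠ x in cofinite ×ˢ l, p x.1 x.2) (h' : ∀ i, ∀ᶠ a in l, p i a) :
    ∀ᶠ a in l, ∀ i, p i a := by
  obtain ⟨pi, hpi, pa, hpa, hp⟩ := eventually_prod_iff.1 h
  filter_upwards [hpa, (eventually_all_finite (eventually_cofinite.1 hpi)).2 fun i _ => h' i]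
    with a ha hfin i
  by_cases hi : pi i
  · exact hp hi ha
  · exact hfin i hi

theorem tendsto_of_forall_dist_le {ι κ α : Type*} [PseudoMetricSpace α] {l : Filter ι}
    {l' : Filter κ} [l'.NeBot] {u : ι → α} {a : α} {g : κ → ι → ℝ} {h : κ → ℝ}
    (hle : ∀ k, ∀ᶠ i in l, dist (u i) a ≤ g k i) (hg : ∀ k, Tendsto (g k) l (𝓝 (h k)))
    (hh : Tendsto h l' (𝓝 0)) : Tendsto u l (𝓝 a) := by
  refine Metric.tendsto_nhds.2 fun ε hε => ?_
  obtain ⟨k, hk⟩ := (hh.eventually_lt_const hε).exists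
  filter_upwards [hle k, (hg k).eventually_lt_const hk] with i h₁ h₂ using h₁.trans_lt h₂

def clip (k y : ℝ) : ℝ := min (max y 0) k

theorem continuous_clip (k : ℝ) : Continuous (clip k) := by unfold clip; fun_prop

theorem abs_clip_le_abs (k y : ℝ) : |clip k y| ≤ |k| := by
  unfold clip; rw [abs_le]; constructor <;> cases abs_cases k <;> grind

theorem abs_clip_le_abs_of_nonneg {k : ℝ} (hk : 0 ≤ k) (y : ℝ) : |clip k y| ≤ |y| := by
  unfold clip; rw [abs_le]; constructor <;> cases abs_cases y <;> grind

theorem clip_le (k : ℝ) {x y : ℝ} (hx : 0 ≤ x) (hyx : y ≤ x) : clip k y ≤ x :=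
  (min_le_left _ _).trans (max_le hyx hx)

theorem clip_le_right (k y : ℝ) : clip k y ≤ k := min_le_right _ _

theorem clip_eq_self {k y : ℝ} (hy : 0 ≤ y) (hyk : y ≤ k) : clip k y = y := by
  simp [clip, hy, hyk]

section

variable {S : Type*} [TopologicalSpace S]

def clipFst (k : ℝ) : C(ℝ × S, ℝ × S) :=
  ⟨fun p => (clip k p.1, p.2), ((continuous_clip k).comp continuous_fst).prodMk continuous_snd⟩

def clipFstBCF (k : ℝ) : ℝ × S →ᵇ ℝ :=
  .mkOfBound ⟨fun p => clip k p.1, (continuous_clip k).comp continuous_fst⟩ (2 * |k|)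
    fun p q => (dist_le_norm_add_norm _ _).trans (by
      simp only [ContinuousMap.coe_mk, Real.norm_eq_abs]
      linarith [abs_clip_le_abs k p.1, abs_clip_le_abs k q.1])

@[simp]
theorem clipFst_apply (k : ℝ) (p : ℝ × S) : clipFst k p = (clip k p.1, p.2) := rfl

@[simp]
theorem clipFstBCF_apply (k : ℝ) (p : ℝ × S) : clipFstBCF k p = clip k p.1 := rfl

end

section Integrals

variable {α : Type*} [MeasurableSpace α] {μ : Measure α}

theorem integrable_clip [IsFiniteMeasure μ] {Y : α → ℝ} (hY : AEStronglyMeasurable Y μ) (k : ℝ) :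
    Integrable (fun ω => clip k (Y ω)) μ :=
  .of_bound ((continuous_clip k).comp_aestronglyMeasurable hY) |k|
    (.of_forall fun ω => abs_clip_le_abs k (Y ω))

theorem tendsto_integral_clip {Y : α → ℝ} (hY : Integrable Y μ) (hY0 : 0 ≤ᵐ[μ] Y) :
    Tendsto (fun k => ∫ ω, clip k (Y ω) ∂μ) atTop (𝓝 (∫ ω, Y ω ∂μ)) := by
  refine tendsto_integral_filter_of_dominated_convergence (fun ω => |Y ω|)
    (.of_forall fun k => (continuous_clip k).comp_aestronglyMeasurable hY.1) ?_ hY.abs ?_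
  · filter_upwards [eventually_ge_atTop 0] with k hk
    exact .of_forall fun ω => abs_clip_le_abs_of_nonneg hk (Y ω)
  · filter_upwards [hY0] with ω hω
    exact tendsto_const_nhds.congr' <| (eventually_ge_atTop (Y ω)).mono fun k hk =>
      (clip_eq_self hω hk).symm

theorem abs_integral_sub_le_of_lipschitzWith {E : Type*} [PseudoMetricSpace E] {f : E → ℝ}
    {L : NNReal} (hf : LipschitzWith L f) {U V : α → E} (hU : Integrable (fun ω => f (U ω)) μ)
    (hV : Integrable (fun ω => f (V ω)) μ) (hUV : Integrable (fun ω => dist (U ω) (V ω)) μ) :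
    |∫ ω, f (U ω) ∂μ - ∫ ω, f (V ω) ∂μ| ≤ L * ∫ ω, dist (U ω) (V ω) ∂μ := by
  rw [← integral_sub hU hV, ← integral_const_mul]
  refine abs_integral_le_integral_abs.trans <| integral_mono (hU.sub hV).abs (hUV.const_mul _)
    fun ω => ?_
  simpa [Real.dist_eq] using hf.dist_le_mul (U ω) (V ω)

theorem tendsto_setIntegral_lt_atTop {X : α → ℝ} (hX : Integrable X μ) (hXm : Measurable X) :
    Tendsto (fun L => ∫ ω in {ω | L < X ω}, X ω ∂μ) atTop (𝓝 0) := by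
  have hs : ∀ L : ℝ, MeasurableSet {ω | L < X ω} := fun L => measurableSet_lt measurable_const hXm
  simp_rw [← integral_indicator (hs _)]
  rw [← integral_zero α ℝ (μ := μ)]
  refine tendsto_integral_filter_of_dominated_convergence (fun ω => |X ω|)
    (.of_forall fun L => (hX.indicator (hs L)).1) (.of_forall fun L => .of_forall fun ω => ?_)
    hX.abs (.of_forall fun ω => ?_)
  · exact norm_indicator_le_norm_self X ω
  · exact tendsto_const_nhds.congr' <| (eventually_ge_atTop (X ω)).mono fun L hL =>
      (Set.indicator_of_notMem (s := {ω | L < X ω}) (not_lt.2 hL) _).symm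

theorem setIntegral_lt_le_two_mul_sub [IsFiniteMeasure μ] {X Y : α → ℝ} (hX : Integrable X μ)
    (hY : AEStronglyMeasurable Y μ) (hX0 : 0 ≤ᵐ[μ] X) (hYX : Y ≤ᵐ[μ] X) {k L : ℝ}
    (hkL : 2 * k ≤ L) :
    ∫ ω in {ω | L < X ω}, X ω ∂μ ≤ 2 * (∫ ω, X ω ∂μ - ∫ ω, clip k (Y ω) ∂μ) := by
  have hd : Integrable (fun ω => 2 * (X ω - clip k (Y ω))) μ :=
    (hX.sub (integrable_clip hY k)).const_mul 2
  have hd0 : 0 ≤ᵐ[μ] fun ω => 2 * (X ω - clip k (Y ω)) := by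
    filter_upwards [hX0, hYX] with ω (h0 : 0 ≤ X ω) h
    simp only [Pi.zero_apply]
    linarith [clip_le k h0 h]
  calc ∫ ω in {ω | L < X ω}, X ω ∂μ
      ≤ ∫ ω in {ω | L < X ω}, 2 * (X ω - clip k (Y ω)) ∂μ :=
        setIntegral_mono_on₀ hX.integrableOn hd.integrableOn
          (nullMeasurableSet_lt aemeasurable_const hX.aemeasurable) fun ω (hω : L < X ω) => by
            linarith [clip_le_right k (Y ω)]
    _ ≤ ∫ ω, 2 * (X ω - clip k (Y ω)) ∂μ := setIntegral_le_integral hd hd0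
    _ = _ := by rw [integral_const_mul, integral_sub hX (integrable_clip hY k)]

theorem abs_integral_sub_integral_clip_le {S : Type*} [PseudoMetricSpace S] [MeasurableSpace S]
    [OpensMeasurableSpace S] [IsFiniteMeasure μ] {g : ℝ × S →ᵇ ℝ} {L : NNReal}
    (hg : LipschitzWith L g) {X Y : α → ℝ} {Z : α → S}
    (hX : Integrable X μ) (hXm : Measurable X) (hYm : Measurable Y) (hZm : Measurable Z)
    (hX0 : 0 ≤ᵐ[μ] X) (hYX : Y ≤ᵐ[μ] X) (k : ℝ) :
    |∫ ω, g (X ω, Z ω) ∂μ - ∫ ω, g (clip k (Y ω), Z ω) ∂μ| ≤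
      L * (∫ ω, X ω ∂μ - ∫ ω, clip k (Y ω) ∂μ) := by
  have hclip := integrable_clip hYm.aestronglyMeasurable (μ := μ) k
  have hdist : (fun ω => dist (X ω, Z ω) (clip k (Y ω), Z ω)) =ᵐ[μ]
      fun ω => X ω - clip k (Y ω) := by
    filter_upwards [hX0, hYX] with ω h0 h
    have := sub_nonneg.2 (clip_le k h0 h)
    rw [Prod.dist_eq, dist_self, Real.dist_eq, abs_of_nonneg this, max_eq_left this]
  rw [← integral_sub hX hclip, ← integral_congr_ae hdist]
  exact abs_integral_sub_le_of_lipschitzWith hg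
    ((g.integrable _).comp_measurable (hXm.prodMk hZm))
    ((g.integrable _).comp_measurable (((continuous_clip k).measurable.comp hYm).prodMk hZm))
    ((hX.sub hclip).congr hdist.symm)

end Integrals

theorem tendsto_integral_comp_of_forall_lipschitzWith {E : Type*} [PseudoEMetricSpace E]
    [MeasurableSpace E] [OpensMeasurableSpace E] {Ω : ℕ → Type*} [∀ n, MeasurableSpace (Ω n)]
    {P : ∀ n, Measure (Ω n)} [∀ n, IsProbabilityMeasure (P n)] {V : ∀ n, Ω n → E}
    (hV : ∀ n, Measurable (V n)) {Ω' : Type*} [MeasurableSpace Ω'] {Q : Measure Ω'}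
    [IsProbabilityMeasure Q] {V' : Ω' → E} (hV' : Measurable V')
    (h : ∀ g : E →ᵇ ℝ, (∃ L, LipschitzWith L g) →
      Tendsto (fun n => ∫ ω, g (V n ω) ∂P n) atTop (𝓝 (∫ ω, g (V' ω) ∂Q)))
    (g : E →ᵇ ℝ) : Tendsto (fun n => ∫ ω, g (V n ω) ∂P n) atTop (𝓝 (∫ ω, g (V' ω) ∂Q)) := by
  let μ n : ProbabilityMeasure E :=
    ⟨(P n).map (V n), Measure.isProbabilityMeasure_map (hV n).aemeasurable⟩
  let ν : ProbabilityMeasure E := ⟨Q.map V', Measure.isProbabilityMeasure_map hV'.aemeasurable⟩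
  have hmapP : ∀ n (f : E → ℝ), Continuous f → ∫ x, f x ∂(P n).map (V n) = ∫ ω, f (V n ω) ∂P n :=
    fun n f hf => integral_map (hV n).aemeasurable hf.measurable.aestronglyMeasurable
  have hmapQ : ∀ f : E → ℝ, Continuous f → ∫ x, f x ∂Q.map V' = ∫ ω, f (V' ω) ∂Q :=
    fun f hf => integral_map hV'.aemeasurable hf.measurable.aestronglyMeasurable
  have hμν : Tendsto μ atTop (𝓝 ν) := by
    refine tendsto_iff_forall_lipschitz_integral_tendsto.2 fun f hb ⟨L, hL⟩ => ?_
    simp only [μ, ν, ProbabilityMeasure.coe_mk, hmapP _ f hL.continuous, hmapQ f hL.continuous]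
    exact h ⟨⟨f, hL.continuous⟩, hb⟩ ⟨L, hL⟩
  simpa only [μ, ν, ProbabilityMeasure.coe_mk, hmapP _ g g.continuous,
    hmapQ g g.continuous]
    using ProbabilityMeasure.tendsto_iff_forall_integral_tendsto.1 hμν g

theorem dist_integral_comp_le_of_clip {α β S : Type*} [MeasurableSpace α] [MeasurableSpace β]
    {μ : Measure α} {ν : Measure β} [IsFiniteMeasure μ] [IsFiniteMeasure ν]
    [PseudoMetricSpace S] [MeasurableSpace S] [OpensMeasurableSpace S]
    {g : ℝ × S →ᵇ ℝ} {L : NNReal} (hg : LipschitzWith L g) {X Y : α → ℝ} {Z : α → S}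
    (hX : Integrable X μ) (hXm : Measurable X) (hYm : Measurable Y) (hZm : Measurable Z)
    (hX0 : 0 ≤ᵐ[μ] X) (hYX : Y ≤ᵐ[μ] X) {Y' : β → ℝ} {Z' : β → S} (hY' : Integrable Y' ν)
    (hY'm : Measurable Y') (hZ'm : Measurable Z') (hY'0 : 0 ≤ᵐ[ν] Y') (k : ℝ) :
    dist (∫ ω, g (X ω, Z ω) ∂μ) (∫ ω, g (Y' ω, Z' ω) ∂ν) ≤
      L * (∫ ω, X ω ∂μ - ∫ ω, clip k (Y ω) ∂μ) +
        dist (∫ ω, g (clip k (Y ω), Z ω) ∂μ) (∫ ω, g (clip k (Y' ω), Z' ω) ∂ν) +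
          L * (∫ ω, Y' ω ∂ν - ∫ ω, clip k (Y' ω) ∂ν) := by
  refine (dist_triangle4 _ _ _ _).trans (add_le_add (add_le_add ?_ le_rfl) ?_)
  · exact abs_integral_sub_integral_clip_le hg hX hXm hYm hZm hX0 hYX k
  · rw [dist_comm]
    exact abs_integral_sub_integral_clip_le hg hY' hY'm hY'm hZ'm hY'0 .rfl k

theorem sandwiching_lemma_general {S : Type*} [MetricSpace S] [MeasurableSpace S]
    [OpensMeasurableSpace S]
    {Ω : ℕ → Type*} [∀ n, MeasurableSpace (Ω n)]
    (P : ∀ n, Measure (Ω n)) [∀ n, IsProbabilityMeasure (P n)]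
    (X : ∀ n, Ω n → ℝ) (Y : ∀ n, Ω n → ℝ) (Z : ∀ n, Ω n → S)
    (hXmeas : ∀ n, Measurable (X n)) (hYmeas : ∀ n, Measurable (Y n))
    (hZmeas : ∀ n, Measurable (Z n))
    (hXnn : ∀ n, ∀ᵐ ω ∂(P n), 0 ≤ X n ω)
    {Ω' : Type*} [MeasurableSpace Ω'] (Q : Measure Ω') [IsProbabilityMeasure Q]
    (Y' : Ω' → ℝ) (Z' : Ω' → S)
    (hY'meas : Measurable Y') (hZ'meas : Measurable Z')
    (hY'nn : ∀ᵐ ω ∂Q, 0 ≤ Y' ω)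
    (hXint : ∀ n, Integrable (X n) (P n)) (hY'int : Integrable Y' Q)
    -- (1) `(Yₙ, Zₙ)` converges in distribution to `(Y, Z)`
    (hdistYZ : ∀ g : BoundedContinuousFunction (ℝ × S) ℝ,
      Tendsto (fun n => ∫ ω, g (Y n ω, Z n ω) ∂(P n)) atTop
        (𝓝 (∫ ω, g (Y' ω, Z' ω) ∂Q)))
    -- (2) `Xₙ ≥ Yₙ` almost surely
    (hsand : ∀ n, ∀ᵐ ω ∂(P n), Y n ω ≤ X n ω)
    -- (3) `E[Xₙ] = 1` and `E[Y] = 1`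
    (hXmean : ∀ n, (∫ ω, X n ω ∂(P n)) = 1) (hY'mean : (∫ ω, Y' ω ∂Q) = 1) :
    (∀ g : BoundedContinuousFunction (ℝ × S) ℝ,
      Tendsto (fun n => ∫ ω, g (X n ω, Z n ω) ∂(P n)) atTop
        (𝓝 (∫ ω, g (Y' ω, Z' ω) ∂Q))) ∧
    (∀ ε : ℝ, 0 < ε → ∃ L : ℝ, ∀ n,
      (∫ ω in {ω | L < X n ω}, X n ω ∂(P n)) < ε) := by
  set a : ℝ → ℝ := fun k => ∫ ω, clip k (Y' ω) ∂Q
  set d : ℝ → ℕ → ℝ := fun k n => ∫ ω, X n ω ∂P n - ∫ ω, clip k (Y n ω) ∂P n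
  have hd : ∀ k, Tendsto (d k) atTop (𝓝 (1 - a k)) := fun k => by
    simpa only [d, hXmean, clipFstBCF_apply] using tendsto_const_nhds.sub (hdistYZ (clipFstBCF k))
  have ha : Tendsto (fun k => 1 - a k) atTop (𝓝 0) := by
    simpa only [hY'mean, sub_self] using
      (tendsto_const_nhds (x := (1 : ℝ))).sub (tendsto_integral_clip hY'int hY'nn)
  refine ⟨tendsto_integral_comp_of_forall_lipschitzWith (fun n => (hXmeas n).prodMk (hZmeas n))
    (hY'meas.prodMk hZ'meas) fun g ⟨L, hg⟩ => ?_, fun ε hε => ?_⟩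
  · set c : ℝ → ℕ → ℝ := fun k n => dist (∫ ω, g (clip k (Y n ω), Z n ω) ∂P n)
      (∫ ω, g (clip k (Y' ω), Z' ω) ∂Q)
    have hc : ∀ k, Tendsto (c k) atTop (𝓝 0) := fun k => by
      simpa only [c, BoundedContinuousFunction.compContinuous_apply, clipFst_apply]
        using tendsto_iff_dist_tendsto_zero.1 (hdistYZ (g.compContinuous (clipFst k)))
    refine tendsto_of_forall_dist_le (g := fun k n => L * d k n + c k n + L * (1 - a k))
      (h := fun k => 2 * L * (1 - a k)) (fun k => .of_forall fun n => ?_) (fun k => ?_)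
      (by simpa using ha.const_mul (2 * L : ℝ))
    · simpa only [hY'mean] using dist_integral_comp_le_of_clip hg (hXint n) (hXmeas n)
        (hYmeas n) (hZmeas n) (hXnn n) (hsand n) hY'int hY'meas hZ'meas hY'nn k
    · convert (((hd k).const_mul (L : ℝ)).add (hc k)).add_const (L * (1 - a k)) using 2
      ring
  · have htail : ∀ᶠ L in atTop, ∀ n, ∫ ω in {ω | L < X n ω}, X n ω ∂P n < ε := by
      refine eventually_forall_of_eventually_cofinite_prod ?_ fun n =>
        (tendsto_setIntegral_lt_atTop (hXint n) (hXmeas n)).eventually_lt_const hε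
      obtain ⟨k, hk⟩ := (ha.eventually_lt_const (half_pos hε)).exists
      rw [Nat.cofinite_eq_atTop]
      filter_upwards [((hd k).eventually_lt_const hk).prod_mk (eventually_ge_atTop (2 * k))]
        with ⟨n, L⟩ ⟨hn, hL⟩
      calc _ ≤ 2 * d k n := setIntegral_lt_le_two_mul_sub (hXint n)
              (hYmeas n).aestronglyMeasurable (hXnn n) (hsand n) hL
        _ < ε := by linarith
    exact htail.exists

/-- Lemma `sandwiching-lemma`: let `(Xₙ, Yₙ, Zₙ)` take values in `[0,∞) × [0,∞) × S`.
If `(Yₙ, Zₙ) ⇒ (Y, Z)`, `Xₙ ≥ Yₙ` a.s., `E[Xₙ] = 1` for all `n` and `E[Y] = 1`, then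
`(Xₙ, Zₙ) ⇒ (Y, Z)` and `(Xₙ)` is uniformly integrable. -/
theorem sandwiching_lemma {S : Type*} [MetricSpace S] [MeasurableSpace S]
    [OpensMeasurableSpace S]
    {Ω : ℕ → Type*} [∀ n, MeasurableSpace (Ω n)]
    (P : ∀ n, Measure (Ω n)) [∀ n, IsProbabilityMeasure (P n)]
    (X : ∀ n, Ω n → ℝ) (Y : ∀ n, Ω n → ℝ) (Z : ∀ n, Ω n → S)
    (hXmeas : ∀ n, Measurable (X n)) (hYmeas : ∀ n, Measurable (Y n))
    (hZmeas : ∀ n, Measurable (Z n))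
    (hXnn : ∀ n, ∀ᵐ ω ∂(P n), 0 ≤ X n ω) (hYnn : ∀ n, ∀ᵐ ω ∂(P n), 0 ≤ Y n ω)
    {Ω' : Type*} [MeasurableSpace Ω'] (Q : Measure Ω') [IsProbabilityMeasure Q]
    (Y' : Ω' → ℝ) (Z' : Ω' → S)
    (hY'meas : Measurable Y') (hZ'meas : Measurable Z')
    (hY'nn : ∀ᵐ ω ∂Q, 0 ≤ Y' ω)
    (hXint : ∀ n, Integrable (X n) (P n)) (hY'int : Integrable Y' Q)
    -- (1) `(Yₙ, Zₙ)` converges in distribution to `(Y, Z)`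
    (hdistYZ : ∀ g : BoundedContinuousFunction (ℝ × S) ℝ,
      Tendsto (fun n => ∫ ω, g (Y n ω, Z n ω) ∂(P n)) atTop
        (𝓝 (∫ ω, g (Y' ω, Z' ω) ∂Q)))
    -- (2) `Xₙ ≥ Yₙ` almost surely
    (hsand : ∀ n, ∀ᵐ ω ∂(P n), Y n ω ≤ X n ω)
    -- (3) `E[Xₙ] = 1` and `E[Y] = 1`
    (hXmean : ∀ n, (∫ ω, X n ω ∂(P n)) = 1) (hY'mean : (∫ ω, Y' ω ∂Q) = 1) :
    (∀ g : BoundedContinuousFunction (ℝ × S) ℝ,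
      Tendsto (fun n => ∫ ω, g (X n ω, Z n ω) ∂(P n)) atTop
        (𝓝 (∫ ω, g (Y' ω, Z' ω) ∂Q))) ∧
    (∀ ε : ℝ, 0 < ε → ∃ L : ℝ, ∀ n,
      (∫ ω in {ω | L < X n ω}, X n ω ∂(P n)) < ε) :=
  sandwiching_lemma_general P X Y Z hXmeas hYmeas hZmeas hXnn Q Y' Z' hY'meas hZ'meas hY'nn hXint
    hY'int hdistYZ hsand hXmean hY'mean
end
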